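/- For every p ∈ [0,1] and every ε > 0, there exists a bipartite graph G = (L, R, E) with nonnegative, pairwise-distinct edge weights such that, for L' ⊆ L a random subset containing each vertex of L independently with probability p, the expected weight of the greedy matching on the subgraph induced by L' ∪ R is at most (p/(1+p) + ε) times the weight of a maximum-weight matching of G. Equivalently, there is a sequence of bipartite graphs G_1, G_2, … on which E[w(Greedy(G_k[L']))] / OPT(G_k) approaches p/(1+p) as k → ∞. -/

import Mathlib

open Finset

open scoped Classical

/-- Greedy matching with fuel: repeatedly pick the maximum-weight remaining edge and
discard all edges conflicting with it. -/
noncomputable def greedyAux {α : Type*} [DecidableEq α] (w : α → ℝ)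
    (conflict : α → α → Prop) : ℕ → Finset α → Finset α
  | 0, _ => ∅
  | n + 1, F =>
    if h : F.Nonempty then
      let e := (F.exists_max_image w h).choose
      insert e (greedyAux w conflict n (F.filter fun f => ¬ conflict e f))
    else ∅

/-- The greedy matching of an edge set `F`: process edges in decreasing order of weight,
adding an edge whenever it conflicts with no previously added edge. -/
noncomputable def greedy {α : Type*} [DecidableEq α] (w : α → ℝ)
    (conflict : α → α → Prop) (F : Finset α) : Finset α :=
  greedyAux w conflict F.card F

/-- Two edges of a bipartite graph conflict iff they share an endpoint. -/
def bconf {L R : Type*} (e f : L × R) : Prop := e.1 = f.1 ∨ e.2 = f.2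

/-- The edge set of the subgraph `G[U ∪ R]` induced by a set `U` of left vertices
(together with the whole right side). -/
def subL {L R : Type*} [DecidableEq L] (E : Finset (L × R)) (U : Finset L) :
    Finset (L × R) :=
  E.filter fun e => e.1 ∈ U

/-- Expectation of `f` over a random subset of `s` containing each element
independently with probability `p`. -/
noncomputable def expSubsets {ι : Type*} (p : ℝ) (s : Finset ι) (f : Finset ι → ℝ) : ℝ :=
  ∑ A ∈ s.powerset, p ^ A.card * (1 - p) ^ (s.card - A.card) * f A

/-- A set of edges is a matching if no two distinct edges conflict. -/
def isMatching {α : Type*} (conflict : α → α → Prop) (M : Finset α) : Prop :=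
  ∀ e ∈ M, ∀ f ∈ M, e ≠ f → ¬ conflict e f

/-- `OPT`: the maximum total weight of a matching contained in the edge set `E`. -/
noncomputable def optWeight {α : Type*} (w : α → ℝ) (conflict : α → α → Prop)
    (E : Finset α) : ℝ :=
  (E.powerset.filter fun M => isMatching conflict M).sup'
    ⟨∅, Finset.mem_filter.mpr ⟨Finset.empty_mem_powerset _,
        fun e he => absurd he (Finset.notMem_empty e)⟩⟩
    (fun M => ∑ e ∈ M, w e)

/-- One step of the greedy-based online algorithm with sample `L'`: the arriving
vertex `u` gets as candidate the edge incident to `u` in `Greedy(G[L' ∪ {u}])`, and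
the candidate edge is added if its right endpoint is not yet matched. -/
noncomputable def stepB {L R : Type*} [DecidableEq L] [DecidableEq R]
    (E : Finset (L × R)) (w : L × R → ℝ) (L' : Finset L)
    (M : Finset (L × R)) (u : L) : Finset (L × R) :=
  M ∪ (greedy w bconf (subL E (insert u L'))).filter
      (fun e => e.1 = u ∧ ∀ f ∈ M, f.2 ≠ e.2)

/-- The output matching of the greedy-based online algorithm with sample `L'`,
when the online vertices arrive in the order given by `order`. -/
noncomputable def runB {L R : Type*} [DecidableEq L] [DecidableEq R]
    (E : Finset (L × R)) (w : L × R → ℝ) (L' : Finset L) (order : List L) :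
    Finset (L × R) :=
  order.foldl (stepB E w L') ∅

lemma greedyAux_spec {α : Type*} [DecidableEq α] (w : α → ℝ) (conflict : α → α → Prop)
    (hrefl : ∀ a, conflict a a) (hsymm : ∀ a b, conflict a b → conflict b a) :
    ∀ (n : ℕ) (F : Finset α), F.card ≤ n →
      (greedyAux w conflict n F ⊆ F) ∧ isMatching conflict (greedyAux w conflict n F) ∧
      (∀ e ∈ F, ∃ f ∈ greedyAux w conflict n F, conflict f e ∧ w e ≤ w f) := by
  intro n
  induction n with
  | zero =>
    intro F hF
    have : F = ∅ := Finset.card_eq_zero.mp (Nat.le_zero.mp hF)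
    subst this
    refine ⟨by simp [greedyAux], ?_, by simp⟩
    intro e he
    simp [greedyAux] at he
  | succ n ih =>
    intro F hF
    by_cases h : F.Nonempty
    · have hunfold : greedyAux w conflict (n+1) F =
        insert (F.exists_max_image w h).choose
          (greedyAux w conflict n (F.filter fun f => ¬ conflict (F.exists_max_image w h).choose f)) := by
        rw [greedyAux]
        simp [h]
      set e := (F.exists_max_image w h).choose with he_def
      obtain ⟨heF, hemax⟩ := (F.exists_max_image w h).choose_spec
      set F' := F.filter fun f => ¬ conflict e f with hF'
      have hF'sub : F' ⊆ F := Finset.filter_subset _ _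
      have heF' : e ∉ F' := by
        simp [hF', hrefl e]
      have hcard : F'.card ≤ n := by
        have : F' ⊆ F.erase e := by
          intro x hx
          exact Finset.mem_erase.mpr ⟨fun hxe => heF' (hxe ▸ hx), hF'sub hx⟩
        calc F'.card ≤ (F.erase e).card := Finset.card_le_card this
          _ = F.card - 1 := Finset.card_erase_of_mem heF
          _ ≤ n := by omega
      obtain ⟨ih1, ih2, ih3⟩ := ih F' hcard
      rw [hunfold]
      refine ⟨?_, ?_, ?_⟩
      · intro x hx
        rcases Finset.mem_insert.mp hx with rfl | hx
        · exact heF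
        · exact hF'sub (ih1 hx)
      · intro a ha b hb hab
        rcases Finset.mem_insert.mp ha with rfl | ha <;>
          rcases Finset.mem_insert.mp hb with rfl | hb
        · exact absurd rfl hab
        · have := ih1 hb
          rw [hF'] at this
          exact fun hc => (Finset.mem_filter.mp this).2 hc
        · have := ih1 ha
          rw [hF'] at this
          exact fun hc => (Finset.mem_filter.mp this).2 (hsymm _ _ hc)
        · exact ih2 a ha b hb hab
      · intro x hx
        by_cases hcx : conflict e x
        · exact ⟨e, Finset.mem_insert_self _ _, hcx, hemax x hx⟩
        · have hxF' : x ∈ F' := Finset.mem_filter.mpr ⟨hx, hcx⟩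
          obtain ⟨f, hf, hcf, hwf⟩ := ih3 x hxF'
          exact ⟨f, Finset.mem_insert_of_mem hf, hcf, hwf⟩
    · have hFe : F = ∅ := Finset.not_nonempty_iff_eq_empty.mp h
      subst hFe
      have h0 : greedyAux w conflict (n+1) ∅ = ∅ := by
        rw [greedyAux]; simp
      rw [h0]
      exact ⟨by simp, fun e he => absurd he (Finset.notMem_empty e), by simp⟩

lemma greedy_spec {α : Type*} [DecidableEq α] (w : α → ℝ) (conflict : α → α → Prop)
    (hrefl : ∀ a, conflict a a) (hsymm : ∀ a b, conflict a b → conflict b a) (F : Finset α) :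
    (greedy w conflict F ⊆ F) ∧ isMatching conflict (greedy w conflict F) ∧
      (∀ e ∈ F, ∃ f ∈ greedy w conflict F, conflict f e ∧ w e ≤ w f) :=
  greedyAux_spec w conflict hrefl hsymm F.card F le_rfl

variable {ι : Type*}

lemma sum_binom_weights (p : ℝ) (s : Finset ι) :
    ∑ A ∈ s.powerset, p ^ A.card * (1 - p) ^ (s.card - A.card) = 1 := by
  have h := Finset.prod_add (fun _ : ι => p) (fun _ : ι => 1 - p) s
  simp only [add_sub_cancel, Finset.prod_const, one_pow] at h
  have h2 : ∑ A ∈ s.powerset, p ^ A.card * (1 - p) ^ (s.card - A.card)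
      = ∑ A ∈ s.powerset, p ^ A.card * (1 - p) ^ (s \ A).card := by
    apply Finset.sum_congr rfl
    intro A hA
    rw [Finset.card_sdiff_of_subset (Finset.mem_powerset.mp hA)]
  rw [h2, ← h]

lemma expSubsets_const (p : ℝ) (s : Finset ι) (c : ℝ) :
    expSubsets p s (fun _ => c) = c := by
  unfold expSubsets
  rw [← Finset.sum_mul, sum_binom_weights, one_mul]

lemma expSubsets_mono (p : ℝ) (hp0 : 0 ≤ p) (hp1 : p ≤ 1) (s : Finset ι)
    (f g : Finset ι → ℝ) (h : ∀ A ∈ s.powerset, f A ≤ g A) :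
    expSubsets p s f ≤ expSubsets p s g := by
  apply Finset.sum_le_sum
  intro A hA
  have : (0:ℝ) ≤ p ^ A.card * (1 - p) ^ (s.card - A.card) :=
    mul_nonneg (pow_nonneg hp0 _) (pow_nonneg (by linarith) _)
  exact mul_le_mul_of_nonneg_left (h A hA) this

lemma expSubsets_finsum (p : ℝ) (s : Finset ι) {κ : Type*} (t : Finset κ)
    (F : κ → Finset ι → ℝ) :
    expSubsets p s (fun A => ∑ i ∈ t, F i A) = ∑ i ∈ t, expSubsets p s (F i) := by
  unfold expSubsets
  simp_rw [Finset.mul_sum]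
  rw [Finset.sum_comm]

lemma expSubsets_smul (p : ℝ) (s : Finset ι) (c : ℝ) (f : Finset ι → ℝ) :
    expSubsets p s (fun A => c * f A) = c * expSubsets p s f := by
  unfold expSubsets
  rw [Finset.mul_sum]
  apply Finset.sum_congr rfl
  intro A _; ring

lemma expSubsets_congr (p : ℝ) (s : Finset ι) (f g : Finset ι → ℝ)
    (h : ∀ A ∈ s.powerset, f A = g A) : expSubsets p s f = expSubsets p s g := by
  unfold expSubsets
  exact Finset.sum_congr rfl fun A hA => by rw [h A hA]

lemma expSubsets_indicator (p : ℝ) (s T : Finset ι) (hT : T ⊆ s) :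
    expSubsets p s (fun A => if T ⊆ A then 1 else 0) = p ^ T.card := by
  unfold expSubsets
  simp_rw [mul_ite, mul_one, mul_zero]
  rw [← Finset.sum_filter]
  have key : ∑ A ∈ s.powerset.filter (fun A => T ⊆ A),
      p ^ A.card * (1 - p) ^ (s.card - A.card)
      = ∑ B ∈ (s \ T).powerset,
      p ^ T.card * (p ^ B.card * (1 - p) ^ ((s \ T).card - B.card)) := by
    apply Finset.sum_nbij' (fun A => A \ T) (fun B => B ∪ T)
    · intro A hA
      rw [Finset.mem_filter, Finset.mem_powerset] at hA
      exact Finset.mem_powerset.mpr (Finset.sdiff_subset_sdiff hA.1 le_rfl)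
    · intro B hB
      rw [Finset.mem_powerset] at hB
      rw [Finset.mem_filter, Finset.mem_powerset]
      exact ⟨Finset.union_subset (hB.trans (Finset.sdiff_subset)) hT,
        Finset.subset_union_right⟩
    · intro A hA
      rw [Finset.mem_filter] at hA
      exact Finset.sdiff_union_of_subset hA.2
    · intro B hB
      rw [Finset.mem_powerset] at hB
      apply Finset.union_sdiff_cancel_right
      exact Finset.disjoint_of_subset_left hB Finset.sdiff_disjoint
    · intro A hA
      rw [Finset.mem_filter, Finset.mem_powerset] at hA
      obtain ⟨hAs, hTA⟩ := hA
      have h1 : (A \ T).card + T.card = A.card := Finset.card_sdiff_add_card_eq_card hTA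
      have h2 : T.card ≤ A.card := Finset.card_le_card hTA
      have h3 : A.card ≤ s.card := Finset.card_le_card hAs
      have h4 : T.card ≤ s.card := Finset.card_le_card hT
      have h5 : (s \ T).card = s.card - T.card := Finset.card_sdiff_of_subset hT
      have e1 : A.card = T.card + (A \ T).card := by omega
      rw [e1, show s.card - (T.card + (A \ T).card) = (s \ T).card - (A \ T).card by omega,
        pow_add, mul_assoc]
  rw [key, ← Finset.mul_sum, sum_binom_weights, mul_one]

lemma expSubsets_card_filter (p : ℝ) (s : Finset ι) (P : ι → Prop) [DecidablePred P] :
    expSubsets p s (fun A => ((A.filter P).card : ℝ)) = p * ((s.filter P).card : ℝ) := by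
  have hrw : ∀ A ∈ s.powerset, ((A.filter P).card : ℝ)
      = ∑ i ∈ s.filter P, (if ({i} : Finset ι) ⊆ A then (1:ℝ) else 0) := by
    intro A hA
    rw [Finset.mem_powerset] at hA
    have : A.filter P = (s.filter P).filter (fun i => i ∈ A) := by
      ext x
      simp only [Finset.mem_filter]
      exact ⟨fun ⟨h1, h2⟩ => ⟨⟨hA h1, h2⟩, h1⟩, fun ⟨⟨_, h2⟩, h3⟩ => ⟨h3, h2⟩⟩
    rw [this, Finset.card_filter]
    push_cast
    apply Finset.sum_congr rfl
    intro i _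
    simp [Finset.singleton_subset_iff]
  rw [expSubsets_congr p s _ _ hrw, expSubsets_finsum]
  have : ∀ i ∈ s.filter P, expSubsets p s (fun A => if ({i} : Finset ι) ⊆ A then (1:ℝ) else 0) = p := by
    intro i hi
    rw [expSubsets_indicator p s {i} (Finset.singleton_subset_iff.mpr (Finset.mem_filter.mp hi).1)]
    simp
  rw [Finset.sum_congr rfl this, Finset.sum_const, nsmul_eq_mul, mul_comm]

lemma expSubsets_card_filter_sq (p : ℝ) (s : Finset ι) (P : ι → Prop) [DecidablePred P] :
    expSubsets p s (fun A => ((A.filter P).card : ℝ)^2)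
      = p * ((s.filter P).card : ℝ) +
        p^2 * (((s.filter P).card : ℝ)^2 - ((s.filter P).card : ℝ)) := by
  set t := s.filter P with ht
  have hts : t ⊆ s := Finset.filter_subset _ _
  have hrw : ∀ A ∈ s.powerset, ((A.filter P).card : ℝ)^2
      = ∑ i ∈ t, ∑ j ∈ t, (if ({i, j} : Finset ι) ⊆ A then (1:ℝ) else 0) := by
    intro A hA
    rw [Finset.mem_powerset] at hA
    have h1 : A.filter P = t.filter (fun i => i ∈ A) := by
      ext x
      simp only [ht, Finset.mem_filter]
      exact ⟨fun ⟨h1, h2⟩ => ⟨⟨hA h1, h2⟩, h1⟩, fun ⟨⟨_, h2⟩, h3⟩ => ⟨h3, h2⟩⟩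
    have h2 : ((A.filter P).card : ℝ) = ∑ i ∈ t, (if i ∈ A then (1:ℝ) else 0) := by
      rw [h1, Finset.card_filter]
      push_cast
      rfl
    rw [sq, h2, Finset.sum_mul_sum]
    apply Finset.sum_congr rfl
    intro i _
    apply Finset.sum_congr rfl
    intro j _
    by_cases hi : i ∈ A <;> by_cases hj : j ∈ A <;>
      simp [hi, hj, Finset.insert_subset_iff]
  rw [expSubsets_congr p s _ _ hrw, expSubsets_finsum]
  have inner : ∀ i ∈ t, (expSubsets p s (fun A => ∑ j ∈ t, (if ({i, j} : Finset ι) ⊆ A then (1:ℝ) else 0)))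
      = p + (t.card - 1) * p^2 := by
    intro i hi
    rw [expSubsets_finsum]
    have hsplit : ∀ j ∈ t, expSubsets p s (fun A => if ({i, j} : Finset ι) ⊆ A then (1:ℝ) else 0)
        = if j = i then p else p^2 := by
      intro j hj
      by_cases hji : j = i
      · subst hji
        rw [show ({j, j} : Finset ι) = {j} from Finset.pair_eq_singleton j]
        rw [expSubsets_indicator p s {j} (Finset.singleton_subset_iff.mpr (hts hj))]
        simp
      · rw [expSubsets_indicator p s {i, j}
          (Finset.insert_subset (hts hi) (Finset.singleton_subset_iff.mpr (hts hj)))]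
        rw [Finset.card_insert_of_notMem (by simp [Ne.symm hji]), Finset.card_singleton]
        simp [hji]
    rw [Finset.sum_congr rfl hsplit]
    have hterm : ∀ x ∈ t, (if x = i then p else p^2) = p^2 + (if x = i then p - p^2 else 0) := by
      intro x _
      by_cases h : x = i <;> simp [h]
    rw [Finset.sum_congr rfl hterm, Finset.sum_add_distrib, Finset.sum_const,
      Finset.sum_ite_eq' t i (fun _ => p - p^2)]
    simp only [hi, if_true, nsmul_eq_mul]
    ring
  rw [Finset.sum_congr rfl inner, Finset.sum_const, nsmul_eq_mul]
  ring

lemma bconf_refl {L R : Type*} (e : L × R) : bconf e e := Or.inl rfl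

lemma bconf_symm {L R : Type*} (e f : L × R) (h : bconf e f) : bconf f e :=
  h.elim (fun h => Or.inl h.symm) (fun h => Or.inr h.symm)

lemma card_fin_lt {N n : ℕ} (h : n ≤ N) :
    (Finset.univ.filter fun x : Fin N => x.val < n).card = n := by
  have himg : (Finset.univ.filter fun x : Fin N => x.val < n).image Fin.val
      = Finset.range n := by
    ext a
    simp only [Finset.mem_image, Finset.mem_filter, Finset.mem_univ, true_and,
      Finset.mem_range]
    constructor
    · rintro ⟨x, hx, rfl⟩; exact hx
    · intro ha; exact ⟨⟨a, lt_of_lt_of_le ha h⟩, ha, rfl⟩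
  calc (Finset.univ.filter fun x : Fin N => x.val < n).card
      = ((Finset.univ.filter fun x : Fin N => x.val < n).image Fin.val).card :=
        (Finset.card_image_of_injective _ Fin.val_injective).symm
    _ = (Finset.range n).card := by rw [himg]
    _ = n := Finset.card_range n

section Instance

variable (m k : ℕ) (δ : ℝ)

/-- Edge set: stealers `l < m` to all roots `r < k` and own ghost `r = k + l`;
victims `l = m + j` to root `j`. -/
def EE : Finset (Fin (m+k) × Fin (k+m)) :=
  Finset.univ.filter fun e =>
    (e.1.val < m ∧ (e.2.val < k ∨ e.2.val = k + e.1.val)) ∨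
    (m ≤ e.1.val ∧ e.2.val < k ∧ e.1.val = m + e.2.val)

def rank (e : Fin (m+k) × Fin (k+m)) : ℕ := e.1.val * (k + m) + e.2.val

noncomputable def ww (e : Fin (m+k) × Fin (k+m)) : ℝ := 1 - δ * ((rank m k e : ℝ) + 1)

lemma mem_EE {e : Fin (m+k) × Fin (k+m)} : e ∈ EE m k ↔
    (e.1.val < m ∧ (e.2.val < k ∨ e.2.val = k + e.1.val)) ∨
    (m ≤ e.1.val ∧ e.2.val < k ∧ e.1.val = m + e.2.val) := by
  simp [EE]

lemma rank_lt (e : Fin (m+k) × Fin (k+m)) : rank m k e < (m+k) * (k+m) := by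
  have h1 : e.1.val < m + k := e.1.isLt
  have h2 : e.2.val < k + m := e.2.isLt
  calc rank m k e = e.1.val * (k+m) + e.2.val := rfl
    _ < e.1.val * (k+m) + (k+m) := by omega
    _ = (e.1.val + 1) * (k+m) := by ring
    _ ≤ (m+k) * (k+m) := Nat.mul_le_mul_right _ (by omega)

lemma ww_le_one (hδ : 0 ≤ δ) (e : Fin (m+k) × Fin (k+m)) : ww m k δ e ≤ 1 := by
  unfold ww
  have : (0:ℝ) ≤ δ * ((rank m k e : ℝ) + 1) := by positivity
  linarith

lemma ww_ge (hδ : 0 ≤ δ) (e : Fin (m+k) × Fin (k+m)) :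
    1 - δ * ((m+k) * (k+m) : ℕ) ≤ ww m k δ e := by
  unfold ww
  have h := rank_lt m k e
  have : ((rank m k e : ℝ) + 1) ≤ (((m+k) * (k+m) : ℕ) : ℝ) := by
    exact_mod_cast Nat.succ_le_of_lt h
  nlinarith

lemma ww_lt_of_rank_lt (hδ : 0 < δ) {e f : Fin (m+k) × Fin (k+m)}
    (h : rank m k e < rank m k f) : ww m k δ f < ww m k δ e := by
  unfold ww
  have : (rank m k e : ℝ) < (rank m k f : ℝ) := by exact_mod_cast h
  nlinarith

lemma rank_inj (hm : 0 < m) {e f : Fin (m+k) × Fin (k+m)}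
    (h : rank m k e = rank m k f) : e = f := by
  unfold rank at h
  have h2 : e.2.val < k + m := e.2.isLt
  have hf2 : f.2.val < k + m := f.2.isLt
  have hN : 0 < k + m := by omega
  have hmod : e.2.val = f.2.val := by
    have he : (e.2.val + e.1.val * (k+m)) % (k+m) = e.2.val := by
      rw [Nat.add_mul_mod_self_right, Nat.mod_eq_of_lt h2]
    have hf : (f.2.val + f.1.val * (k+m)) % (k+m) = f.2.val := by
      rw [Nat.add_mul_mod_self_right, Nat.mod_eq_of_lt hf2]
    rw [← he, ← hf]
    congr 1
    omega
  have h1 : e.1.val = f.1.val := by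
    have := h
    rw [hmod] at this
    have := Nat.eq_of_mul_eq_mul_right hN (by omega : e.1.val * (k+m) = f.1.val * (k+m))
    exact this
  exact Prod.ext (Fin.ext h1) (Fin.ext hmod)

lemma ww_injOn (hδ : 0 < δ) (hm : 0 < m) : Set.InjOn (ww m k δ) ↑(EE m k) := by
  intro e _ f _ h
  apply rank_inj m k hm
  unfold ww at h
  have h' : δ * ((rank m k e : ℝ) + 1) = δ * ((rank m k f : ℝ) + 1) := by linarith
  have h'' := mul_left_cancel₀ (ne_of_gt hδ) h'
  have : ((rank m k e : ℝ)) = ((rank m k f : ℝ)) := by linarith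
  exact_mod_cast this

/-- victim edges are lighter than stealer edges -/
lemma rank_stealer_lt_victim {e f : Fin (m+k) × Fin (k+m)}
    (he : e.1.val < m) (hf : m ≤ f.1.val) : rank m k e < rank m k f := by
  unfold rank
  have h2 : e.2.val < k + m := e.2.isLt
  have : e.1.val * (k+m) + (k+m) ≤ m * (k+m) := by
    calc e.1.val * (k+m) + (k+m) = (e.1.val + 1) * (k+m) := by ring
      _ ≤ m * (k+m) := Nat.mul_le_mul_right _ (by omega)
  have : m * (k+m) ≤ f.1.val * (k+m) := Nat.mul_le_mul_right _ hf
  omega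

/-- The key counting bound for greedy on a sampled subgraph. -/
lemma greedy_card_le (hδ : 0 < δ) (hm : 0 < m) (A : Finset (Fin (m+k))) :
    (greedy (ww m k δ) bconf (subL (EE m k) A)).card
      ≤ max (A.filter fun l => l.val < m).card k := by
  classical
  set F := subL (EE m k) A with hF
  obtain ⟨hMF, hMatch, hBlock⟩ := greedy_spec (ww m k δ) bconf bconf_refl bconf_symm F
  set M := greedy (ww m k δ) bconf F with hM
  have hFE : F ⊆ EE m k := Finset.filter_subset _ _
  have hFA : ∀ e ∈ F, e.1 ∈ A := fun e he => (Finset.mem_filter.mp he).2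
  by_cases hvic : ∃ v ∈ M, m ≤ v.1.val
  · -- a victim edge is matched: no ghost edges, so all rights are roots: |M| ≤ k
    obtain ⟨v, hvM, hv⟩ := hvic
    have hvE := hFE (hMF hvM)
    rw [mem_EE] at hvE
    have hvprop : v.2.val < k ∧ v.1.val = m + v.2.val := by
      rcases hvE with ⟨h1, _⟩ | ⟨_, h2, h3⟩
      · omega
      · exact ⟨h2, h3⟩
    -- claim: every edge of M has right component a root
    have hroot : ∀ e ∈ M, e.2.val < k := by
      intro e heM
      by_contra hge
      push_neg at hge
      have heE := hFE (hMF heM)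
      rw [mem_EE] at heE
      have heprop : e.1.val < m ∧ e.2.val = k + e.1.val := by
        rcases heE with ⟨h1, h2 | h3⟩ | ⟨_, h2, _⟩
        · omega
        · exact ⟨h1, h3⟩
        · omega
      -- consider the edge g from e.1 to the root v.2
      set g : Fin (m+k) × Fin (k+m) := (e.1, v.2) with hg
      have hgE : g ∈ EE m k := by
        rw [mem_EE]
        exact Or.inl ⟨heprop.1, Or.inl hvprop.1⟩
      have hgF : g ∈ F := by
        rw [hF]
        exact Finset.mem_filter.mpr ⟨hgE, hFA e (hMF heM)⟩
      obtain ⟨f, hfM, hcf, hwf⟩ := hBlock g hgF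
      rcases hcf with hc1 | hc2
      · -- f.1 = g.1 = e.1 : f = e, but rank g < rank e
        have hfe : f = e := by
          by_contra hne
          exact hMatch f hfM e heM hne (Or.inl hc1)
        rw [hfe] at hwf
        have hlt : rank m k g < rank m k e := by
          have hgr : rank m k g = e.1.val * (k+m) + v.2.val := rfl
          have her : rank m k e = e.1.val * (k+m) + e.2.val := rfl
          omega
        exact absurd hwf (not_le.mpr (ww_lt_of_rank_lt m k δ hδ hlt))
      · -- f.2 = g.2 = v.2 : f = v, but rank g < rank v
        have hfv : f = v := by
          by_contra hne
          exact hMatch f hfM v hvM hne (Or.inr hc2)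
        rw [hfv] at hwf
        have hlt : rank m k g < rank m k v :=
          rank_stealer_lt_victim m k heprop.1 hv
        exact absurd hwf (not_le.mpr (ww_lt_of_rank_lt m k δ hδ hlt))
    -- rights are injective on M, all roots
    have hinj : Set.InjOn Prod.snd (↑M : Set (Fin (m+k) × Fin (k+m))) := by
      intro e he f hf hef
      by_contra hne
      exact hMatch e (by exact_mod_cast he) f (by exact_mod_cast hf) (by exact_mod_cast hne) (Or.inr hef)
    have : M.card = (M.image Prod.snd).card := (Finset.card_image_of_injOn hinj).symm
    rw [this]
    have hsub : M.image Prod.snd ⊆ Finset.univ.filter fun r : Fin (k+m) => r.val < k := by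
      intro r hr
      obtain ⟨e, heM, rfl⟩ := Finset.mem_image.mp hr
      exact Finset.mem_filter.mpr ⟨Finset.mem_univ _, hroot e heM⟩
    calc (M.image Prod.snd).card ≤ _ := Finset.card_le_card hsub
      _ = k := card_fin_lt (by omega)
      _ ≤ max (A.filter fun l => l.val < m).card k := le_max_right _ _
  · -- no victim edge: each M edge has a distinct sampled stealer as left
    push_neg at hvic
    have hinj : Set.InjOn Prod.fst (↑M : Set (Fin (m+k) × Fin (k+m))) := by
      intro e he f hf hef
      by_contra hne
      exact hMatch e (by exact_mod_cast he) f (by exact_mod_cast hf) (by exact_mod_cast hne) (Or.inl hef)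
    have : M.card = (M.image Prod.fst).card := (Finset.card_image_of_injOn hinj).symm
    rw [this]
    have hsub : M.image Prod.fst ⊆ A.filter fun l => l.val < m := by
      intro l hl
      obtain ⟨e, heM, rfl⟩ := Finset.mem_image.mp hl
      exact Finset.mem_filter.mpr ⟨hFA e (hMF heM), hvic e heM⟩
    calc (M.image Prod.fst).card ≤ _ := Finset.card_le_card hsub
      _ ≤ max (A.filter fun l => l.val < m).card k := le_max_left _ _

end Instance

section OptBound

variable (m k : ℕ) (δ : ℝ)

def partner (l : Fin (m+k)) : Fin (k+m) :=
  if h : l.val < m then ⟨k + l.val, by omega⟩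
  else ⟨l.val - m, by have := l.isLt; omega⟩

def M0 : Finset (Fin (m+k) × Fin (k+m)) :=
  Finset.univ.image fun l => (l, partner m k l)

lemma partner_val_lt {l : Fin (m+k)} (h : l.val < m) :
    (partner m k l).val = k + l.val := by
  simp [partner, h]

lemma partner_val_ge {l : Fin (m+k)} (h : ¬ l.val < m) :
    (partner m k l).val = l.val - m := by
  simp [partner, h]

lemma partner_inj : Function.Injective (partner m k) := by
  intro a b hab
  have ha := a.isLt
  have hb := b.isLt
  have hv : (partner m k a).val = (partner m k b).val := by rw [hab]
  apply Fin.ext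
  by_cases h1 : a.val < m <;> by_cases h2 : b.val < m
  · rw [partner_val_lt m k h1, partner_val_lt m k h2] at hv; omega
  · rw [partner_val_lt m k h1, partner_val_ge m k h2] at hv; omega
  · rw [partner_val_ge m k h1, partner_val_lt m k h2] at hv; omega
  · rw [partner_val_ge m k h1, partner_val_ge m k h2] at hv; omega

lemma M0_subset : M0 m k ⊆ EE m k := by
  intro e he
  obtain ⟨l, _, rfl⟩ := Finset.mem_image.mp he
  rw [mem_EE]
  dsimp only
  have hl := l.isLt
  by_cases h : l.val < m
  · exact Or.inl ⟨h, Or.inr (partner_val_lt m k h)⟩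
  · refine Or.inr ⟨by omega, ?_, ?_⟩
    · rw [partner_val_ge m k h]; omega
    · rw [partner_val_ge m k h]; omega

lemma M0_matching : isMatching bconf (M0 m k) := by
  intro e he f hf hef hconf
  obtain ⟨l, _, rfl⟩ := Finset.mem_image.mp he
  obtain ⟨l', _, rfl⟩ := Finset.mem_image.mp hf
  rcases hconf with h | h
  · simp only at h
    exact hef (by rw [h])
  · simp only at h
    have := partner_inj m k h
    exact hef (by rw [this])

lemma M0_card : (M0 m k).card = m + k := by
  unfold M0
  rw [Finset.card_image_of_injective]
  · simp
  · intro a b hab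
    exact (Prod.ext_iff.mp hab).1

lemma optWeight_lower (hδ : 0 ≤ δ) :
    ((m+k : ℕ) : ℝ) * (1 - δ * ((m+k) * (k+m) : ℕ)) ≤ optWeight (ww m k δ) bconf (EE m k) := by
  have hmem : M0 m k ∈ (EE m k).powerset.filter fun M => isMatching bconf M :=
    Finset.mem_filter.mpr ⟨Finset.mem_powerset.mpr (M0_subset m k), M0_matching m k⟩
  have hle := Finset.le_sup' (fun M => ∑ e ∈ M, ww m k δ e) hmem
  refine le_trans ?_ hle
  have hsum := Finset.card_nsmul_le_sum (M0 m k) (ww m k δ)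
    (1 - δ * ((m+k) * (k+m) : ℕ)) (fun e _ => ww_ge m k δ hδ e)
  rw [nsmul_eq_mul, M0_card] at hsum
  exact_mod_cast hsum

end OptBound

section Moments

variable {ι : Type*}

lemma expSubsets_add (p : ℝ) (s : Finset ι) (f g : Finset ι → ℝ) :
    expSubsets p s (fun A => f A + g A) = expSubsets p s f + expSubsets p s g := by
  unfold expSubsets
  rw [← Finset.sum_add_distrib]
  apply Finset.sum_congr rfl
  intro A _; ring

lemma expSubsets_abs_le_sqrt (p : ℝ) (hp0 : 0 ≤ p) (hp1 : p ≤ 1) (s : Finset ι)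
    (x : Finset ι → ℝ) :
    expSubsets p s (fun A => |x A|) ≤ Real.sqrt (expSubsets p s (fun A => (x A)^2)) := by
  set μ : Finset ι → ℝ := fun A => p ^ A.card * (1 - p) ^ (s.card - A.card) with hμdef
  have hμ : ∀ A, 0 ≤ μ A := fun A =>
    mul_nonneg (pow_nonneg hp0 _) (pow_nonneg (by linarith) _)
  have hS1 : (0:ℝ) ≤ expSubsets p s (fun A => |x A|) :=
    Finset.sum_nonneg fun A _ => mul_nonneg (hμ A) (abs_nonneg _)
  have hS2 : (0:ℝ) ≤ expSubsets p s (fun A => (x A)^2) :=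
    Finset.sum_nonneg fun A _ => mul_nonneg (hμ A) (sq_nonneg _)
  rw [Real.le_sqrt hS1 hS2]
  have CS := Finset.sum_mul_sq_le_sq_mul_sq s.powerset
    (fun A => Real.sqrt (μ A)) (fun A => Real.sqrt (μ A) * |x A|)
  have h1 : ∑ A ∈ s.powerset, Real.sqrt (μ A) * (Real.sqrt (μ A) * |x A|)
      = expSubsets p s (fun A => |x A|) := by
    apply Finset.sum_congr rfl
    intro A _
    rw [← mul_assoc, Real.mul_self_sqrt (hμ A)]
  have h2 : ∑ A ∈ s.powerset, (Real.sqrt (μ A))^2 = 1 := by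
    have : ∀ A ∈ s.powerset, (Real.sqrt (μ A))^2 = μ A := fun A _ => Real.sq_sqrt (hμ A)
    rw [Finset.sum_congr rfl this]
    exact sum_binom_weights p s
  have h3 : ∑ A ∈ s.powerset, (Real.sqrt (μ A) * |x A|)^2
      = expSubsets p s (fun A => (x A)^2) := by
    apply Finset.sum_congr rfl
    intro A _
    rw [mul_pow, Real.sq_sqrt (hμ A), sq_abs]
  rw [h1, h2, h3, one_mul] at CS
  exact CS

lemma expSubsets_sq_dev (p : ℝ) (s : Finset ι) (P : ι → Prop) [DecidablePred P] (K : ℝ) :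
    expSubsets p s (fun A => (((A.filter P).card : ℝ) - K)^2)
      = p * ((s.filter P).card : ℝ)
        + p^2 * (((s.filter P).card : ℝ)^2 - ((s.filter P).card : ℝ))
        - 2*K*(p * ((s.filter P).card : ℝ)) + K^2 := by
  have hpt : ∀ A ∈ s.powerset, (((A.filter P).card : ℝ) - K)^2
      = ((A.filter P).card : ℝ)^2 + ((-2*K) * ((A.filter P).card : ℝ) + K^2) := by
    intro A _; ring
  rw [expSubsets_congr p s _ _ hpt, expSubsets_add, expSubsets_add,
    expSubsets_smul, expSubsets_const, expSubsets_card_filter_sq,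
    expSubsets_card_filter]
  ring

end Moments


lemma final_arith (p c η m k sm ε : ℝ) (hp0 : 0 ≤ p) (hp1 : p ≤ 1)
    (hc0 : 0 < c) (hc1 : c ≤ 1) (hcε : c ≤ ε)
    (hη0 : 0 < η) (hηc : η = c/8)
    (hm16 : 16/c^2 ≤ m) (hm16' : 16 ≤ m)
    (hkp : p*m ≤ k) (hk1 : k < p*m + 1)
    (hsm : sm*sm = m) (hsm4 : 4/c ≤ sm) (hsmpos : 0 < sm) :
    k + sm ≤ (p/(1+p) + ε) * ((m + k)*(1-η)) := by
  have h1p : (0:ℝ) < 1 + p := by linarith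
  have hη1 : η ≤ 1/8 := by rw [hηc]; linarith
  have hmpos : (0:ℝ) < m := by linarith
  have hT0 : (0:ℝ) ≤ p / (1+p) := div_nonneg hp0 h1p.le
  have hm_k : (1+p) * m ≤ m + k := by linarith [hkp]
  have step1 : (p/(1+p) + c) * ((1+p) * m) ≤ (p/(1+p) + ε) * (m + k) := by
    have h1 : p/(1+p) + c ≤ p/(1+p) + ε := by linarith
    have h3 : (0:ℝ) ≤ (1+p) * m := by positivity
    exact mul_le_mul h1 hm_k h3 (by linarith)
  have step2 : (p/(1+p) + c) * ((1+p) * m) = p * m + c * (1+p) * m := by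
    field_simp
  have step3 : p * m + c * m ≤ p * m + c * (1+p) * m := by
    linarith [mul_nonneg (mul_nonneg hc0.le hp0) hmpos.le]
  have hη' : (0:ℝ) < 1 - η := by linarith
  have hA : (p * m + c * m) * (1 - η) ≤ (p/(1+p) + ε) * ((m + k) * (1 - η)) := by
    have hx : p * m + c * m ≤ (p/(1+p) + ε) * (m + k) := by linarith
    have h := mul_le_mul_of_nonneg_right hx hη'.le
    linarith [h]
  have hB : p * m + (3/4) * c * m ≤ (p * m + c * m) * (1 - η) := by
    have h1 : η * (p * m) ≤ η * m := by
      apply mul_le_mul_of_nonneg_left _ hη0.le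
      linarith [mul_nonneg hmpos.le (by linarith : (0:ℝ) ≤ 1 - p)]
    have h2 : η * (c * m) ≤ η * m := by
      apply mul_le_mul_of_nonneg_left _ hη0.le
      linarith [mul_nonneg hmpos.le (by linarith : (0:ℝ) ≤ 1 - c)]
    have h3 : 2 * (η * m) ≤ (c/4) * m := by
      rw [hηc]; linarith
    linarith [h1, h2, h3]
  have hs4 : (4:ℝ) ≤ sm := by
    have h4le : (4:ℝ) ≤ 4/c := by
      rw [le_div_iff₀ hc0]; linarith
    linarith
  have hC : k + sm ≤ p * m + (3/4) * c * m := by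
    have h3s : (3:ℝ) * sm ≤ (3/4) * c * m := by
      have hpos : (0:ℝ) ≤ (3/4) * c * sm := by positivity
      have h := mul_le_mul_of_nonneg_left hsm4 hpos
      have hid : (3/4) * c * sm * (4/c) = 3 * sm := by
        field_simp
      have hid2 : (3/4) * c * sm * sm = (3/4) * c * m := by
        rw [mul_assoc ((3/4) * c) sm sm, hsm]
      linarith [h, hid, hid2]
    linarith
  linarith

/-- The bound `p/(1+p)` of Statement 3 is tight: for every `p ∈ [0,1]`
and `ε > 0` there is a bipartite graph (with distinct nonnegative weights and positive
optimum) on which the expected weight of the greedy matching on a `p`-sample of the left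
side is at most `(p/(1+p) + ε) · OPT`. -/
theorem stmt4 (p : ℝ) (hp : p ∈ Set.Icc (0 : ℝ) 1) (ε : ℝ) (hε : 0 < ε) :
    ∃ (nL nR : ℕ) (E : Finset (Fin nL × Fin nR)) (w : Fin nL × Fin nR → ℝ),
      (∀ e ∈ E, 0 ≤ w e) ∧ Set.InjOn w ↑E ∧ 0 < optWeight w bconf E ∧
      expSubsets p Finset.univ (fun A => ∑ e ∈ greedy w bconf (subL E A), w e)
        ≤ (p / (1 + p) + ε) * optWeight w bconf E := by
  obtain ⟨hp0, hp1⟩ := hp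
  have h1p : (0:ℝ) < 1 + p := by linarith
  obtain ⟨c, hc0, hc1, hcε⟩ : ∃ c : ℝ, 0 < c ∧ c ≤ 1 ∧ c ≤ ε :=
    ⟨min ε 1, lt_min hε one_pos, min_le_right _ _, min_le_left _ _⟩
  obtain ⟨m, hm1, hm16⟩ : ∃ m : ℕ, 1 ≤ m ∧ (16:ℝ)/c^2 ≤ (m:ℝ) := by
    refine ⟨max 1 ⌈(16:ℝ)/c^2⌉₊, le_max_left _ _, ?_⟩
    calc (16:ℝ)/c^2 ≤ (⌈(16:ℝ)/c^2⌉₊ : ℝ) := Nat.le_ceil _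
      _ ≤ _ := by exact_mod_cast le_max_right 1 _
  have hm16' : (16:ℝ) ≤ (m:ℝ) := by
    have hcc : c^2 ≤ 1 := by nlinarith
    have h16 : (16:ℝ) ≤ 16/c^2 := by
      rw [le_div_iff₀ (by positivity)]
      nlinarith
    linarith
  have hmpos : (0:ℝ) < (m:ℝ) := by linarith
  obtain ⟨k, hkp, hk1⟩ : ∃ k : ℕ, p * (m:ℝ) ≤ (k:ℝ) ∧ (k:ℝ) < p * (m:ℝ) + 1 :=
    ⟨⌈p * (m:ℝ)⌉₊, Nat.le_ceil _, Nat.ceil_lt_add_one (by positivity)⟩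
  obtain ⟨η, hη0, hη1, hηc⟩ : ∃ η : ℝ, 0 < η ∧ η ≤ 1/8 ∧ η = c/8 :=
    ⟨c/8, by positivity, by linarith, rfl⟩
  have hprodpos : (0:ℝ) < (((m+k)*(k+m) : ℕ) : ℝ) := by
    have h1 : 1 ≤ (m+k)*(k+m) := Nat.one_le_iff_ne_zero.mpr (by positivity)
    exact_mod_cast lt_of_lt_of_le Nat.zero_lt_one h1
  obtain ⟨δ, hδ0, hδprod⟩ : ∃ δ : ℝ, 0 < δ ∧ δ * (((m+k)*(k+m) : ℕ) : ℝ) = η :=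
    ⟨η / (((m+k)*(k+m) : ℕ) : ℝ), div_pos hη0 hprodpos,
      div_mul_cancel₀ η (ne_of_gt hprodpos)⟩
  refine ⟨m+k, k+m, EE m k, ww m k δ, ?_, ww_injOn m k δ hδ0 hm1, ?_, ?_⟩
  · -- nonneg weights
    intro e _
    have hge := ww_ge m k δ hδ0.le e
    rw [hδprod] at hge
    linarith
  · -- positive optimum
    have hlow := optWeight_lower m k δ hδ0.le
    rw [hδprod] at hlow
    have hcard : (1:ℝ) ≤ ((m+k : ℕ) : ℝ) := by
      exact_mod_cast Nat.one_le_iff_ne_zero.mpr (by omega)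
    nlinarith
  · -- main expectation bound
    have hNval : ((Finset.univ.filter fun l : Fin (m+k) => l.val < m).card) = m :=
      card_fin_lt (by omega : m ≤ m + k)
    -- pointwise bound
    have hpt : ∀ A ∈ (Finset.univ : Finset (Fin (m+k))).powerset,
        (∑ e ∈ greedy (ww m k δ) bconf (subL (EE m k) A), ww m k δ e)
          ≤ (k:ℝ) + |((A.filter fun l => l.val < m).card : ℝ) - (k:ℝ)| := by
      intro A _
      have hsum := Finset.sum_le_card_nsmul (greedy (ww m k δ) bconf (subL (EE m k) A))
        (ww m k δ) 1 (fun e _ => ww_le_one m k δ hδ0.le e)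
      rw [nsmul_eq_mul, mul_one] at hsum
      have hcardle := greedy_card_le m k δ hδ0 hm1 A
      have hcast : ((greedy (ww m k δ) bconf (subL (EE m k) A)).card : ℝ)
          ≤ ((max (A.filter fun l => l.val < m).card k : ℕ) : ℝ) := by
        exact_mod_cast hcardle
      have hmax : ((max (A.filter fun l => l.val < m).card k : ℕ) : ℝ)
          ≤ (k:ℝ) + |((A.filter fun l => l.val < m).card : ℝ) - (k:ℝ)| := by
        rw [Nat.cast_max]
        rcases le_total (((A.filter fun l => l.val < m).card : ℕ) : ℝ) ((k:ℕ) : ℝ) with h | h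
        · rw [max_eq_right h]
          have := abs_nonneg (((A.filter fun l : Fin (m+k) => l.val < m).card : ℝ) - (k:ℝ))
          linarith
        · rw [max_eq_left h, abs_of_nonneg (by linarith)]
          linarith
      linarith
    have hEX1 := expSubsets_mono p hp0 hp1 Finset.univ _ _ hpt
    have hEX2 : expSubsets p Finset.univ
        (fun A => (k:ℝ) + |((A.filter fun l : Fin (m+k) => l.val < m).card : ℝ) - (k:ℝ)|)
        = (k:ℝ) + expSubsets p Finset.univ
            (fun A => |((A.filter fun l : Fin (m+k) => l.val < m).card : ℝ) - (k:ℝ)|) := by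
      rw [expSubsets_add, expSubsets_const]
    have hEX3 := expSubsets_abs_le_sqrt p hp0 hp1 Finset.univ
      (fun A => ((A.filter fun l : Fin (m+k) => l.val < m).card : ℝ) - (k:ℝ))
    have hEX4 : expSubsets p Finset.univ
        (fun A => (((A.filter fun l : Fin (m+k) => l.val < m).card : ℝ) - (k:ℝ))^2)
          ≤ (m:ℝ) := by
      rw [expSubsets_sq_dev p Finset.univ (fun l : Fin (m+k) => l.val < m) ((k:ℕ) : ℝ),
        hNval]
      have hid : p * (m:ℝ) + p^2*((m:ℝ)^2 - (m:ℝ)) - 2*(k:ℝ)*(p*(m:ℝ)) + (k:ℝ)^2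
          = p*(m:ℝ)*(1-p) + (p*(m:ℝ) - (k:ℝ))^2 := by ring
      rw [hid]
      have h4 : p*(m:ℝ)*(1-p) ≤ (m:ℝ)/4 := by nlinarith [sq_nonneg (p - 1/2)]
      have h5 : (p*(m:ℝ) - (k:ℝ))^2 ≤ 1 := by nlinarith
      linarith
    have hsqrt := Real.sqrt_le_sqrt hEX4
    have hEXf : expSubsets p Finset.univ
        (fun A => ∑ e ∈ greedy (ww m k δ) bconf (subL (EE m k) A), ww m k δ e)
        ≤ (k:ℝ) + Real.sqrt (m:ℝ) := by
      have h35 := le_trans hEX3 hsqrt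
      linarith
    -- lower bound on opt
    have hlow := optWeight_lower m k δ hδ0.le
    rw [hδprod] at hlow
    have hmk : ((m+k : ℕ) : ℝ) = (m:ℝ) + (k:ℝ) := by push_cast; ring
    rw [hmk] at hlow
    -- final arithmetic
    have hmult : (0:ℝ) < p/(1+p) + ε := by
      have : (0:ℝ) ≤ p / (1+p) := div_nonneg hp0 (by linarith)
      linarith
    have hsm : Real.sqrt (m:ℝ) * Real.sqrt (m:ℝ) = (m:ℝ) := Real.mul_self_sqrt hmpos.le
    have hsm4 : (4:ℝ)/c ≤ Real.sqrt (m:ℝ) := by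
      have h44 : ((4:ℝ)/c)^2 = 16/c^2 := by
        rw [div_pow]; norm_num
      rw [show (4:ℝ)/c = Real.sqrt (((4:ℝ)/c)^2) from
        (Real.sqrt_sq (by positivity)).symm]
      apply Real.sqrt_le_sqrt
      rw [h44]; exact hm16
    have hsmpos : (0:ℝ) < Real.sqrt (m:ℝ) := by
      have h4c : (0:ℝ) < 4/c := by positivity
      linarith
    have hkey : (k:ℝ) + Real.sqrt (m:ℝ)
        ≤ (p/(1+p) + ε) * (((m:ℝ) + (k:ℝ)) * (1 - η)) :=
      final_arith p c η (m:ℝ) (k:ℝ) (Real.sqrt (m:ℝ)) ε hp0 hp1 hc0 hc1 hcε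
        hη0 hηc hm16 hm16' hkp hk1 hsm hsm4 hsmpos
    have hfin := mul_le_mul_of_nonneg_left hlow hmult.le
    linarith
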